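/- The regularized smoothing Ψ̃^R(S; L) = max_{||X||_op ≤ 1} {⟨S, X⟩ − (1/2) tr(X^T L X)} + (1/2) tr(L) satisfies upper stability with constant 1/2: for any PSD matrices L₁ ⪯ L₂ and all S, Ψ̃^R(S; L₂) − Ψ̃^R(S; L₁) ≤ (1/2)(tr(L₂) − tr(L₁)). -/

import Mathlib

/-!
For `L₁ ⪯ L₂` every `Xᵀ (L₂ - L₁) X` is positive semidefinite, so the penalised objective
`⟨S, X⟩ - ½ tr(Xᵀ L X)` can only decrease when `L₁` is replaced by `L₂`. Hence the maximum term
of `Ψ̃^R(S; L)` is antitone in `L`, and the difference `Ψ̃^R(S; L₂) - Ψ̃^R(S; L₁)` is bounded by the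
change of the trace term alone. The supremum for `L₁` is a true supremum, not the
junk `sSup` of an unbounded set: for `L₁ ⪰ 0` the objective is at most `⟨S, X⟩ ≤ ∑ |S i j|`,
as the entries of `X` in the operator ball are bounded by `1`.
-/

open Matrix Finset
open scoped Classical

noncomputable def psqrt {m : ℕ} (A : Matrix (Fin m) (Fin m) ℝ) : Matrix (Fin m) (Fin m) ℝ :=
  if h : A.PosSemidef then (h.1.eigenvectorUnitary.1 * diagonal (((↑) : ℝ → ℝ) ∘ (√·) ∘ h.1.eigenvalues) *
    (star h.1.eigenvectorUnitary : Matrix (Fin m) (Fin m) ℝ)) else 0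

noncomputable def nuclearNorm {m : ℕ} {n : Type*} [Fintype n]
    (A : Matrix (Fin m) n ℝ) : ℝ :=
  (psqrt (A * Aᵀ)).trace

noncomputable def ip {m : ℕ} {n : Type*} [Fintype n] (A B : Matrix (Fin m) n ℝ) : ℝ :=
  (Aᵀ * B).trace

/-- The operator-norm unit ball `{X : ‖X‖_op ≤ 1}`, characterized by `Xᵀ X ⪯ I`. -/
def opBall {m n : ℕ} : Set (Matrix (Fin m) (Fin n) ℝ) :=
  {X | ((1 : Matrix (Fin n) (Fin n) ℝ) - Xᵀ * X).PosSemidef}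

/-- The regularized smoothing
`Ψ̃^R(S; L) = max_{‖X‖_op ≤ 1} {⟨S, X⟩ − (1/2) tr(Xᵀ L X)} + (1/2) tr(L)`. -/
noncomputable def psiR {m n : ℕ} (S : Matrix (Fin m) (Fin n) ℝ)
    (L : Matrix (Fin m) (Fin m) ℝ) : ℝ :=
  sSup ((fun X : Matrix (Fin m) (Fin n) ℝ =>
    ip S X - 1 / 2 * (Xᵀ * L * X).trace) '' opBall) + 1 / 2 * L.trace

noncomputable def smoothingObjective {m n : ℕ} (S : Matrix (Fin m) (Fin n) ℝ)
    (L : Matrix (Fin m) (Fin m) ℝ) (X : Matrix (Fin m) (Fin n) ℝ) : ℝ :=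
  ip S X - 1 / 2 * (Xᵀ * L * X).trace

lemma psiR_eq_sSup_smoothingObjective {m n : ℕ} (S : Matrix (Fin m) (Fin n) ℝ)
    (L : Matrix (Fin m) (Fin m) ℝ) :
    psiR S L = sSup (smoothingObjective S L '' opBall) + 1 / 2 * L.trace :=
  rfl

section TransposeMulMul

variable {m n : Type*} [Fintype m] [Fintype n]

lemma trace_transpose_mul_mul_nonneg {L : Matrix m m ℝ} (hL : L.PosSemidef)
    (X : Matrix m n ℝ) : 0 ≤ (Xᵀ * L * X).trace := by
  have h := hL.conjTranspose_mul_mul_same X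
  rw [conjTranspose_eq_transpose_of_trivial] at h
  exact h.trace_nonneg

lemma trace_transpose_mul_mul_mono {L₁ L₂ : Matrix m m ℝ} (h : (L₂ - L₁).PosSemidef)
    (X : Matrix m n ℝ) : (Xᵀ * L₁ * X).trace ≤ (Xᵀ * L₂ * X).trace := by
  have h₀ := trace_transpose_mul_mul_nonneg h X
  rw [Matrix.mul_sub, Matrix.sub_mul, trace_sub] at h₀
  linarith

end TransposeMulMul

section OpBall

variable {m n : ℕ}

lemma zero_mem_opBall : (0 : Matrix (Fin m) (Fin n) ℝ) ∈ opBall := by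
  simpa [opBall] using (PosSemidef.one : (1 : Matrix (Fin n) (Fin n) ℝ).PosSemidef)

lemma abs_apply_le_one_of_mem_opBall {X : Matrix (Fin m) (Fin n) ℝ} (hX : X ∈ opBall)
    (i : Fin m) (j : Fin n) : |X i j| ≤ 1 := by
  have hcol : ∑ a, X a j ^ 2 ≤ 1 := by
    have hd : 0 ≤ ((1 : Matrix (Fin n) (Fin n) ℝ) - Xᵀ * X) j j := hX.diag_nonneg
    simpa [mul_apply, sq] using hd
  have hsq : X i j ^ 2 ≤ 1 :=
    (single_le_sum (f := fun a => X a j ^ 2) (fun a _ => sq_nonneg _) (mem_univ i)).trans hcol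
  exact (sq_le_one_iff_abs_le_one _).mp hsq

lemma ip_le_sum_abs_of_mem_opBall (S : Matrix (Fin m) (Fin n) ℝ)
    {X : Matrix (Fin m) (Fin n) ℝ} (hX : X ∈ opBall) : ip S X ≤ ∑ i, ∑ j, |S i j| := by
  calc ip S X = ∑ j, ∑ i, S i j * X i j := by simp [ip, trace, mul_apply]
    _ ≤ ∑ j, ∑ i, |S i j| := by
        gcongr with j _ i _
        calc S i j * X i j ≤ |S i j| * |X i j| := (le_abs_self _).trans (abs_mul _ _).le
          _ ≤ |S i j| := mul_le_of_le_one_right (abs_nonneg _) (abs_apply_le_one_of_mem_opBall hX i j)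
    _ = ∑ i, ∑ j, |S i j| := sum_comm

end OpBall

section SmoothingObjective

variable {m n : ℕ} (S : Matrix (Fin m) (Fin n) ℝ)

lemma bddAbove_smoothingObjective_image {L : Matrix (Fin m) (Fin m) ℝ} (hL : L.PosSemidef) :
    BddAbove (smoothingObjective S L '' opBall) := by
  refine ⟨∑ i, ∑ j, |S i j|, ?_⟩
  rintro _ ⟨X, hX, rfl⟩
  have hpen := trace_transpose_mul_mul_nonneg hL X
  have hip := ip_le_sum_abs_of_mem_opBall S hX
  rw [smoothingObjective]
  linarith

lemma smoothingObjective_anti {L₁ L₂ : Matrix (Fin m) (Fin m) ℝ} (h₁₂ : (L₂ - L₁).PosSemidef)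
    (X : Matrix (Fin m) (Fin n) ℝ) : smoothingObjective S L₂ X ≤ smoothingObjective S L₁ X := by
  have := trace_transpose_mul_mul_mono h₁₂ X
  rw [smoothingObjective, smoothingObjective]
  linarith

lemma sSup_smoothingObjective_anti {L₁ L₂ : Matrix (Fin m) (Fin m) ℝ} (h₁ : L₁.PosSemidef)
    (h₁₂ : (L₂ - L₁).PosSemidef) :
    sSup (smoothingObjective S L₂ '' opBall) ≤ sSup (smoothingObjective S L₁ '' opBall) := by
  refine csSup_le (Set.Nonempty.image _ ⟨0, zero_mem_opBall⟩) ?_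
  rintro _ ⟨X, hX, rfl⟩
  exact (smoothingObjective_anti S h₁₂ X).trans
    (le_csSup (bddAbove_smoothingObjective_image S h₁) ⟨X, hX, rfl⟩)

end SmoothingObjective

/-- the regularized smoothing satisfies upper stability with constant
`1/2`: for PSD matrices `L₁ ⪯ L₂` and all `S`,
`Ψ̃^R(S; L₂) − Ψ̃^R(S; L₁) ≤ (1/2)(tr L₂ − tr L₁)`. -/
theorem stmt9 {m n : ℕ} (S : Matrix (Fin m) (Fin n) ℝ)
    (L₁ L₂ : Matrix (Fin m) (Fin m) ℝ) (h₁ : L₁.PosSemidef)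
    (h₁₂ : (L₂ - L₁).PosSemidef) :
    psiR S L₂ - psiR S L₁ ≤ 1 / 2 * (L₂.trace - L₁.trace) := by
  have := sSup_smoothingObjective_anti S h₁ h₁₂
  rw [psiR_eq_sSup_smoothingObjective, psiR_eq_sSup_smoothingObjective]
  linarith
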